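/- arXiv:1702.05816 — 4 statements merged into one kernel-verified Lean document; each statement's English description precedes it below -/
import Mathlib

section
/- Let p ≥ 1 and q be integers with gcd(p,q) = 1, let θ = e^{2πi/p}, let (z,w) ∈ S³, and let k be an integer not divisible by p. Then the Euclidean distance in ℂ² between (θ^{kq} z, θ^k w) and (z,w) satisfies ‖(θ^{kq} z − z, θ^k w − w)‖ ≥ |θ − 1| = 2 sin(π/p). -/
/-! Multiplying by a complex number `u` scales norms by `‖u‖`, so the squared distance equals
`‖θ^{kq} - 1‖² ‖z‖² + ‖θ^k - 1‖² ‖w‖²`, an average of two squared chords of the regular `p`-gon.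
Coprimality makes `kq`, like `k`, a non-multiple of `p`, and the chord `‖θ^n - 1‖ = 2 |sin (π n / p)|`
over such `n` is shortest for `n ≡ ±1 (mod p)`. -/

open Real

theorem Real.sin_le_sin_of_le_of_le_pi_sub {a x : ℝ} (ha : 0 ≤ a) (hax : a ≤ x)
    (hxa : x ≤ π - a) : sin a ≤ sin x := by
  have hsin : 0 ≤ sin ((x - a) / 2) := sin_nonneg_of_nonneg_of_le_pi (by linarith) (by linarith)
  have hcos : 0 ≤ cos ((x + a) / 2) :=
    cos_nonneg_of_neg_pi_div_two_le_of_le (by linarith) (by linarith)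
  nlinarith [sin_sub_sin x a, mul_nonneg hsin hcos]

theorem Real.sin_pi_div_le_abs_sin_pi_mul_div {p n : ℤ} (hp : 0 < p) (hn : ¬ p ∣ n) :
    sin (π / p) ≤ |sin (π * n / p)| := by
  have hpR : (0 : ℝ) < p := by exact_mod_cast hp
  have hr : 1 ≤ n % p :=
    lt_of_le_of_ne (Int.emod_nonneg n hp.ne') fun h => hn (Int.dvd_of_emod_eq_zero h.symm)
  have hrp : n % p + 1 ≤ p := Int.emod_lt_of_pos n hp
  have hrR : (1 : ℝ) ≤ (n % p : ℤ) := by exact_mod_cast hr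
  have hrpR : ((n % p : ℤ) : ℝ) + 1 ≤ p := by exact_mod_cast hrp
  have hshift : π * n / p = π * (n % p : ℤ) / p + (n / p : ℤ) * π := by
    conv_lhs => rw [← Int.emod_add_mul_ediv n p]
    push_cast
    field_simp
  rw [hshift, sin_add_int_mul_pi, abs_mul, abs_neg_one_zpow, one_mul]
  refine (sin_le_sin_of_le_of_le_pi_sub (by positivity) ?_ ?_).trans (le_abs_self _)
  · rw [div_le_div_iff_of_pos_right hpR]; nlinarith [pi_pos]
  · rw [le_sub_iff_add_le, ← add_div, div_le_iff₀ hpR]; nlinarith [pi_pos]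

theorem norm_exp_two_pi_I_div_zpow_sub_one (p n : ℤ) :
    ‖Complex.exp (2 * π * Complex.I / p) ^ n - 1‖ = 2 * |sin (π * n / p)| := by
  have hexp : Complex.exp (2 * π * Complex.I / p) ^ n
      = Complex.exp (Complex.I * ↑(2 * (π * n / p))) := by
    rw [← Complex.exp_int_mul]; push_cast; ring_nf
  rw [hexp, Complex.norm_exp_I_mul_ofReal_sub_one, mul_div_cancel_left₀ _ two_ne_zero, norm_mul,
    Real.norm_ofNat, Real.norm_eq_abs]

theorem norm_exp_two_pi_I_div_sub_one {p : ℤ} (hp : 0 < p) :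
    ‖Complex.exp (2 * π * Complex.I / p) - 1‖ = 2 * sin (π / p) := by
  have hpR : (1 : ℝ) ≤ p := by exact_mod_cast hp
  have hsin : 0 ≤ sin (π / p) :=
    sin_nonneg_of_nonneg_of_le_pi (by positivity) (div_le_self pi_pos.le hpR)
  simpa [abs_of_nonneg hsin] using norm_exp_two_pi_I_div_zpow_sub_one p 1

theorem norm_exp_two_pi_I_div_sub_one_le {p n : ℤ} (hp : 0 < p) (hn : ¬ p ∣ n) :
    ‖Complex.exp (2 * π * Complex.I / p) - 1‖ ≤ ‖Complex.exp (2 * π * Complex.I / p) ^ n - 1‖ := by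
  rw [norm_exp_two_pi_I_div_sub_one hp, norm_exp_two_pi_I_div_zpow_sub_one]
  gcongr
  exact sin_pi_div_le_abs_sin_pi_mul_div hp hn

theorem le_sqrt_norm_mul_sq_add_norm_mul_sq {𝕜 : Type*} [NormedDivisionRing 𝕜] {c : ℝ}
    {u v z w : 𝕜} (hc : 0 ≤ c) (hu : c ≤ ‖u‖) (hv : c ≤ ‖v‖) (hzw : ‖z‖ ^ 2 + ‖w‖ ^ 2 = 1) :
    c ≤ √(‖u * z‖ ^ 2 + ‖v * w‖ ^ 2) := by
  refine le_sqrt_of_sq_le ?_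
  rw [norm_mul, norm_mul, mul_pow, mul_pow]
  nlinarith [pow_le_pow_left₀ hc hu 2, pow_le_pow_left₀ hc hv 2, sq_nonneg ‖z‖, sq_nonneg ‖w‖]

/-- Let `p ≥ 1` and `q` be integers with `gcd(p,q) = 1`, let
`θ = e^{2πi/p}`, let `(z,w) ∈ S³`, and let `k` be an integer not divisible by `p`.
Then the Euclidean distance in `ℂ²` between `(θ^{kq} z, θ^k w)` and `(z,w)` satisfies
`‖(θ^{kq} z − z, θ^k w − w)‖ ≥ |θ − 1| = 2 sin(π/p)`. -/
theorem lens_space_chordal_distance_bound (p q k : ℤ) (hp : 1 ≤ p)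
    (hpq : Int.gcd p q = 1) (hk : ¬ p ∣ k)
    (z w : ℂ) (hzw : ‖z‖ ^ 2 + ‖w‖ ^ 2 = 1)
    (θ : ℂ) (hθ : θ = Complex.exp (2 * Real.pi * Complex.I / p)) :
    Real.sqrt (‖θ ^ (k * q) * z - z‖ ^ 2 + ‖θ ^ k * w - w‖ ^ 2)
        ≥ ‖θ - 1‖ ∧
      ‖θ - 1‖ = 2 * Real.sin (Real.pi / p) := by
  subst hθ
  have hkq : ¬ p ∣ k * q := fun h => hk (Int.dvd_of_dvd_mul_left_of_gcd_one h hpq)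
  refine ⟨?_, ?_⟩
  · rw [← sub_one_mul, ← sub_one_mul]
    exact le_sqrt_norm_mul_sq_add_norm_mul_sq (norm_nonneg _)
      (norm_exp_two_pi_I_div_sub_one_le hp hkq) (norm_exp_two_pi_I_div_sub_one_le hp hk) hzw
  · exact norm_exp_two_pi_I_div_sub_one hp
end

section
/- Let v₁, v₂ ∈ ℝ² be linearly independent, let L = ℤv₁ + ℤv₂, let d = |det(v₁,v₂)| be the covolume of L, and suppose λ > 0 is the minimum of ‖u‖ over nonzero u ∈ L. Then for every x ∈ ℝ² there exists u ∈ L with ‖x − u‖ ≤ λ/2 + d/(2λ). -/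
/-!
A shortest nonzero lattice vector `P = a • v₁ + b • v₂` has coprime coordinates, so it extends to a
lattice basis `P, w` with the same oriented area `ω P w = ω v₁ v₂`. Rounding first the area
coordinate and then the `P`-coordinate of `x` leaves a remainder `z` with `|ω P z| ≤ |ω P w| / 2`
and `|⟪P, z⟫| ≤ ‖P‖² / 2`, and Lagrange's identity `⟪P, z⟫² + (ω P z)² = ‖P‖² ‖z‖²` turns these
into `‖P‖ ‖z‖ ≤ ‖P‖² / 2 + |ω P w| / 2`.
-/

open Module RealInnerProductSpace

theorem exists_int_abs_sub_mul_le (t : ℝ) {s : ℝ} (hs : s ≠ 0) : ∃ n : ℤ, |t - n * s| ≤ |s| / 2 := by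
  refine ⟨round (t / s), ?_⟩
  calc |t - round (t / s) * s| = |t / s - round (t / s)| * |s| := by
        rw [← abs_mul, sub_mul, div_mul_cancel₀ t hs]
    _ ≤ 1 / 2 * |s| := by gcongr; exact abs_sub_round _
    _ = |s| / 2 := by ring

theorem isCoprime_of_norm_le_zsmul_add_zsmul {E : Type*} [NormedAddCommGroup E] [NormedSpace ℝ E]
    {v₁ v₂ : E} {a b : ℤ} (h0 : a • v₁ + b • v₂ ≠ 0)
    (hmin : ∀ a' b' : ℤ, a' • v₁ + b' • v₂ ≠ 0 → ‖a • v₁ + b • v₂‖ ≤ ‖a' • v₁ + b' • v₂‖) :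
    IsCoprime a b := by
  rw [Int.isCoprime_iff_gcd_eq_one]
  obtain ⟨a', ha'⟩ := Int.gcd_dvd_left a b
  obtain ⟨b', hb'⟩ := Int.gcd_dvd_right a b
  set g := Int.gcd a b
  have hscale : a • v₁ + b • v₂ = (g : ℤ) • (a' • v₁ + b' • v₂) := by
    rw [smul_add, smul_smul, smul_smul, ← ha', ← hb']
  rw [hscale] at h0 hmin
  have hne : a' • v₁ + b' • v₂ ≠ 0 := right_ne_zero_of_smul h0
  have hg := hmin a' b' hne
  rw [norm_zsmul ℝ, Int.cast_natCast, Real.norm_natCast,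
    mul_le_iff_le_one_left (norm_pos_iff.mpr hne)] at hg
  have hg0 : g ≠ 0 := by rintro hg0; simp [hg0] at h0
  norm_cast at hg
  omega

namespace Orientation

variable {E : Type*} [NormedAddCommGroup E] [InnerProductSpace ℝ E] [Fact (finrank ℝ E = 2)]
  (o : Orientation ℝ E (Fin 2))

local notation "ω" => o.areaForm

theorem areaForm_zsmul_add_zsmul (a b c e : ℤ) (v₁ v₂ : E) :
    ω (a • v₁ + b • v₂) (c • v₁ + e • v₂) = ((a * e - b * c : ℤ) : ℝ) * ω v₁ v₂ := by
  simp only [map_add, map_zsmul, LinearMap.add_apply, LinearMap.smul_apply, areaForm_apply_self,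
    o.areaForm_swap v₂ v₁, zsmul_eq_mul]
  push_cast
  ring

theorem areaForm_ne_zero_of_linearIndependent {x y : E} (h : LinearIndependent ℝ ![x, y]) :
    ω x y ≠ 0 := by
  have := FiniteDimensional.of_fact_finrank_eq_two (K := ℝ) (V := E)
  let b := o.finOrthonormalBasis two_pos Fact.out
  have hspan := h.span_eq_top_of_card_eq_finrank' (by simp [Fact.out (p := finrank ℝ E = 2)])
  rw [← abs_ne_zero, areaForm_to_volumeForm, o.volumeForm_robust' b, abs_ne_zero]
  exact (b.toBasis.is_basis_iff_det.mp ⟨h, hspan⟩).ne_zero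

theorem norm_mul_norm_le_abs_inner_add_abs_areaForm (x y : E) :
    ‖x‖ * ‖y‖ ≤ |⟪x, y⟫| + |ω x y| := by
  rw [← pow_le_pow_iff_left₀ (by positivity) (by positivity) two_ne_zero, mul_pow,
    ← o.inner_sq_add_areaForm_sq]
  nlinarith [sq_abs ⟪x, y⟫, sq_abs (ω x y), abs_nonneg ⟪x, y⟫, abs_nonneg (ω x y)]

theorem exists_norm_sub_zsmul_add_zsmul_le {P w : E} (hPw : ω P w ≠ 0) (x : E) :
    ∃ p q : ℤ, ‖x - (p • P + q • w)‖ ≤ ‖P‖ / 2 + |ω P w| / (2 * ‖P‖) := by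
  have hPpos : 0 < ‖P‖ := norm_pos_iff.mpr fun hP ↦ hPw (by simp [hP])
  obtain ⟨q, hq⟩ := exists_int_abs_sub_mul_le (ω P x) hPw
  obtain ⟨p, hp⟩ := exists_int_abs_sub_mul_le ⟪P, x - q • w⟫ (pow_pos hPpos 2).ne'
  refine ⟨p, q, ?_⟩
  set z := x - (p • P + q • w)
  have hinner : ⟪P, z⟫ = ⟪P, x - q • w⟫ - p * ‖P‖ ^ 2 := by
    simp only [z, ← Int.cast_smul_eq_zsmul ℝ, inner_sub_right, inner_add_right,
      real_inner_smul_right, real_inner_self_eq_norm_sq]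
    ring
  have harea : ω P z = ω P x - q * ω P w := by
    simp only [z, map_sub, map_add, map_zsmul, areaForm_apply_self, zsmul_eq_mul]
    ring
  have hz : ‖P‖ * ‖z‖ ≤ ‖P‖ ^ 2 / 2 + |ω P w| / 2 :=
    calc ‖P‖ * ‖z‖ ≤ |⟪P, z⟫| + |ω P z| := o.norm_mul_norm_le_abs_inner_add_abs_areaForm P z
      _ ≤ ‖P‖ ^ 2 / 2 + |ω P w| / 2 := by
        rw [hinner, harea]
        exact (add_le_add hp hq).trans_eq (by rw [abs_of_pos (pow_pos hPpos 2)])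
  rw [show ‖P‖ / 2 + |ω P w| / (2 * ‖P‖) = (‖P‖ ^ 2 / 2 + |ω P w| / 2) / ‖P‖ by
    field_simp, le_div_iff₀' hPpos]
  exact hz

theorem exists_norm_sub_zsmul_add_zsmul_le_of_isCoprime {v₁ v₂ : E}
    (hind : LinearIndependent ℝ ![v₁, v₂]) {a b : ℤ} (hab : IsCoprime a b) (x : E) :
    ∃ m n : ℤ, ‖x - (m • v₁ + n • v₂)‖ ≤
      ‖a • v₁ + b • v₂‖ / 2 + |ω v₁ v₂| / (2 * ‖a • v₁ + b • v₂‖) := by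
  obtain ⟨e, c, hec⟩ := hab
  have hω : ω (a • v₁ + b • v₂) ((-c) • v₁ + e • v₂) = ω v₁ v₂ := by
    rw [areaForm_zsmul_add_zsmul, show a * e - b * -c = 1 by linear_combination hec,
      Int.cast_one, one_mul]
  obtain ⟨p, q, hpq⟩ :=
    o.exists_norm_sub_zsmul_add_zsmul_le (hω ▸ o.areaForm_ne_zero_of_linearIndependent hind) x
  refine ⟨p * a - q * c, p * b + q * e, ?_⟩
  rw [← hω]
  convert hpq using 3
  simp only [smul_add, smul_smul, sub_smul, add_smul, neg_smul, smul_neg]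
  abel

end Orientation

open scoped EuclideanSpace in
theorem EuclideanSpace.abs_areaForm_eq (o : Orientation ℝ (EuclideanSpace ℝ (Fin 2)) (Fin 2))
    (x y : EuclideanSpace ℝ (Fin 2)) : |o.areaForm x y| = |x 0 * y 1 - x 1 * y 0| := by
  rw [o.areaForm_to_volumeForm, o.volumeForm_robust' (EuclideanSpace.basisFun (Fin 2) ℝ),
    Basis.det_apply, Matrix.det_fin_two]
  simp [Basis.toMatrix_apply]
  ring_nf

theorem lattice_covering_radius_bound_general (v₁ v₂ : EuclideanSpace ℝ (Fin 2))
    (hind : LinearIndependent ℝ ![v₁, v₂])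
    (L : Set (EuclideanSpace ℝ (Fin 2)))
    (hL : L = {u | ∃ a b : ℤ, u = a • v₁ + b • v₂})
    (d : ℝ) (hd : d = |v₁ 0 * v₂ 1 - v₁ 1 * v₂ 0|)
    (lam : ℝ)
    (hmin : IsLeast {r : ℝ | ∃ u ∈ L, u ≠ 0 ∧ ‖u‖ = r} lam) :
    ∀ x : EuclideanSpace ℝ (Fin 2), ∃ u ∈ L, ‖x - u‖ ≤ lam / 2 + d / (2 * lam) := by
  have : Fact (finrank ℝ (EuclideanSpace ℝ (Fin 2)) = 2) := ⟨finrank_euclideanSpace_fin⟩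
  let o := (EuclideanSpace.basisFun (Fin 2) ℝ).toBasis.orientation
  intro x
  subst hL hd
  obtain ⟨⟨_, ⟨a, b, rfl⟩, hne, rfl⟩, hle⟩ := hmin
  have hab : IsCoprime a b :=
    isCoprime_of_norm_le_zsmul_add_zsmul hne fun a' b' h ↦ hle ⟨_, ⟨a', b', rfl⟩, h, rfl⟩
  obtain ⟨m, n, hmn⟩ := o.exists_norm_sub_zsmul_add_zsmul_le_of_isCoprime hind hab x
  exact ⟨m • v₁ + n • v₂, ⟨m, n, rfl⟩, by rwa [← EuclideanSpace.abs_areaForm_eq o]⟩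

/-- Let `v₁, v₂ ∈ ℝ²` be linearly independent, let `L = ℤv₁ + ℤv₂`,
let `d = |det(v₁,v₂)|` be the covolume of `L`, and suppose `λ > 0` is the minimum of
`‖u‖` over nonzero `u ∈ L`. Then for every `x ∈ ℝ²` there exists `u ∈ L` with
`‖x − u‖ ≤ λ/2 + d/(2λ)`. -/
theorem lattice_covering_radius_bound (v₁ v₂ : EuclideanSpace ℝ (Fin 2))
    (hind : LinearIndependent ℝ ![v₁, v₂])
    (L : Set (EuclideanSpace ℝ (Fin 2)))
    (hL : L = {u | ∃ a b : ℤ, u = a • v₁ + b • v₂})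
    (d : ℝ) (hd : d = |v₁ 0 * v₂ 1 - v₁ 1 * v₂ 0|)
    (lam : ℝ) (hlam : 0 < lam)
    (hmin : IsLeast {r : ℝ | ∃ u ∈ L, u ≠ 0 ∧ ‖u‖ = r} lam) :
    ∀ x : EuclideanSpace ℝ (Fin 2), ∃ u ∈ L, ‖x - u‖ ≤ lam / 2 + d / (2 * lam) :=
  lattice_covering_radius_bound_general v₁ v₂ hind L hL d hd lam hmin
end

section
/- Let (p_l, q_l) be a sequence of pairs of integers with p_l → ∞, 1 ≤ q_l < p_l and gcd(p_l, q_l) = 1, and let L_l = {(a + k q_l/p_l, b + k/p_l) : a, b, k ∈ ℤ} ⊂ ℝ². Then there is a subsequence along which one of the following holds: (1) sup_{x ∈ [0,1]²} dist(x, L_l) → 0 (the lattices become dense, so the orbits on each Clifford torus become dense); or (2) there exist a nonzero vector (m₀, n₀) ∈ ℤ² and a positive integer b, independent of l, such that for every l in the subsequence there are points c_{l,1}, …, c_{l,b} ∈ ℝ² with L_l ⊆ ⋃_{i=1}^{b} (c_{l,i} + ℝ·(m₀, n₀) + ℤ²), i.e. each L_l is contained in b families of parallel lines with direction (m₀, n₀)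 modulo ℤ². -/
/-!
Scaled by `p`, the set `L` is the lattice `Λ = {(m, n) ∈ ℤ² | m ≡ n q [ZMOD p]}` of index `p`.
If one fixed nonzero `(m, n)` lies in `Λ` for infinitely many `l`, then `n x₀ - m x₁` is an integer
on those `L`, which therefore lie on `gcd(m, n)` families of lines of direction `(m, n)`.
Otherwise, for every `K`, eventually `Λ` has no nonzero vector in `[-K, K]²`. Dirichlet's
approximation of `q / p` by a reduced fraction `j / k` with `k ≤ K` yields `w = (k q - j p, k) ∈ Λ`
with `K < ‖w‖ ≤ √2 p / K`, and it extends to a basis of `Λ` of determinant `p`. Rounding in that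
basis puts every point of the plane within `√(‖w‖² / (4 p²) + 1 / (4 ‖w‖²)) ≤ 1 / K` of `L`.
-/

open Filter Topology

theorem exists_int_comb_near_of_det_ne_zero {u₀ u₁ v₀ v₁ : ℝ} (hD : u₀ * v₁ - u₁ * v₀ ≠ 0)
    (x₀ x₁ : ℝ) : ∃ α β : ℤ,
      (u₀ ^ 2 + u₁ ^ 2) * ((x₀ - α * u₀ - β * v₀) ^ 2 + (x₁ - α * u₁ - β * v₁) ^ 2) ≤
        (u₀ ^ 2 + u₁ ^ 2) ^ 2 / 4 + (u₀ * v₁ - u₁ * v₀) ^ 2 / 4 := by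
  set D := u₀ * v₁ - u₁ * v₀
  set S := u₀ ^ 2 + u₁ ^ 2
  have hS : S ≠ 0 := by
    have : u₀ ≠ 0 ∨ u₁ ≠ 0 := by
      by_contra! h
      simp [D, h] at hD
    rcases this with h | h <;> positivity
  -- β picks the lattice line parallel to `u` nearest to `x`, α the nearest point on it
  set β := round ((u₀ * x₁ - u₁ * x₀) / D)
  set α := round ((u₀ * (x₀ - β * v₀) + u₁ * (x₁ - β * v₁)) / S)
  refine ⟨α, β, ?_⟩
  set s₀ := x₀ - α * u₀ - β * v₀
  set s₁ := x₁ - α * u₁ - β * v₁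
  have hcross : |u₀ * s₁ - u₁ * s₀| ≤ |D| / 2 := by
    have h : u₀ * s₁ - u₁ * s₀ = D * ((u₀ * x₁ - u₁ * x₀) / D - β) := by
      rw [mul_sub D, mul_div_cancel₀ _ hD]; ring
    rw [h, abs_mul]
    nlinarith [abs_sub_round ((u₀ * x₁ - u₁ * x₀) / D), abs_nonneg D]
  have hdot : |u₀ * s₀ + u₁ * s₁| ≤ S / 2 := by
    have h : u₀ * s₀ + u₁ * s₁ = S * ((u₀ * (x₀ - β * v₀) + u₁ * (x₁ - β * v₁)) / S - α) := by
      rw [mul_sub S, mul_div_cancel₀ _ hS]; ring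
    rw [h, abs_mul, abs_of_nonneg (by positivity : 0 ≤ S)]
    nlinarith [abs_sub_round ((u₀ * (x₀ - β * v₀) + u₁ * (x₁ - β * v₁)) / S),
      (by positivity : 0 ≤ S)]
  calc S * (s₀ ^ 2 + s₁ ^ 2) = (u₀ * s₀ + u₁ * s₁) ^ 2 + (u₀ * s₁ - u₁ * s₀) ^ 2 := by ring
    _ ≤ (S / 2) ^ 2 + (|D| / 2) ^ 2 :=
      add_le_add (sq_le_sq' (abs_le.1 hdot).1 (abs_le.1 hdot).2)
        (sq_le_sq' (abs_le.1 hcross).1 (abs_le.1 hcross).2)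
    _ = S ^ 2 / 4 + D ^ 2 / 4 := by rw [div_pow, div_pow, sq_abs]; ring

def lensSet (P Q : ℤ) : Set (EuclideanSpace ℝ (Fin 2)) :=
  {x | ∃ a b k : ℤ, x 0 = (a : ℝ) + (k : ℝ) * (Q : ℝ) / (P : ℝ) ∧ x 1 = (b : ℝ) + (k : ℝ) / (P : ℝ)}

theorem mem_lensSet_of_modEq {P Q a b : ℤ} (hP : P ≠ 0) (h : a ≡ b * Q [ZMOD P]) :
    !₂[(a : ℝ) / P, (b : ℝ) / P] ∈ lensSet P Q := by
  obtain ⟨c, hc⟩ := h.dvd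
  have hcR : (b : ℝ) * Q - a = P * c := by exact_mod_cast hc
  refine ⟨-c, 0, b, ?_, ?_⟩
  · simp only [Matrix.cons_val_zero]
    field_simp
    push_cast
    linarith
  · simp

theorem exists_basis_with_short_vector {P : ℤ} (hP : 0 < P) (Q : ℤ) {K : ℕ} (hK : 0 < K) :
    ∃ m n m' n' : ℤ, m ≡ n * Q [ZMOD P] ∧ m' ≡ n' * Q [ZMOD P] ∧ m * n' - n * m' = P ∧
      0 < n ∧ n ≤ K ∧ |m| * K ≤ P := by
  -- Dirichlet approximation of `Q / P` by a fraction `r` in lowest terms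
  obtain ⟨r, hr, hden⟩ := Real.exists_rat_abs_sub_le_and_den_le ((Q : ℝ) / P) hK
  obtain ⟨a, b, hab⟩ : IsCoprime r.num r.den := Int.isCoprime_iff_gcd_eq_one.2 r.reduced
  refine ⟨r.den * Q - r.num * P, r.den, -(a * Q + b * P), -a, Int.modEq_iff_dvd.2 ⟨r.num, by ring⟩,
    Int.modEq_iff_dvd.2 ⟨b, by ring⟩, by linear_combination P * hab, by exact_mod_cast r.den_pos,
    by exact_mod_cast hden, ?_⟩
  have hm : ((r.den * Q - r.num * P : ℤ) : ℝ) = P * r.den * ((Q : ℝ) / P - r) := by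
    rw [Rat.cast_def]
    push_cast
    field_simp
  have hmR : |((r.den * Q - r.num * P : ℤ) : ℝ)| * K ≤ P := by
    rw [hm, abs_mul, abs_of_pos (by positivity)]
    calc P * r.den * |(Q : ℝ) / P - r| * K ≤ P * r.den * (1 / ((K + 1) * r.den)) * K := by gcongr
      _ = P * (K / (K + 1)) := by field_simp
      _ ≤ P * 1 := by gcongr; rw [div_le_one (by positivity)]; linarith
      _ = P := mul_one _
  exact_mod_cast hmR

theorem exists_modEq_near_of_det_eq {P Q m n m' n' : ℤ} (hP : P ≠ 0)
    (hw : m ≡ n * Q [ZMOD P]) (hy : m' ≡ n' * Q [ZMOD P]) (hdet : m * n' - n * m' = P)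
    (x₀ x₁ : ℝ) : ∃ a b : ℤ, a ≡ b * Q [ZMOD P] ∧
      ((m : ℝ) ^ 2 + n ^ 2) * ((x₀ - a / P) ^ 2 + (x₁ - b / P) ^ 2) ≤
        ((m : ℝ) ^ 2 + n ^ 2) ^ 2 / (4 * P ^ 2) + 1 / 4 := by
  have hPR : (P : ℝ) ≠ 0 := by exact_mod_cast hP
  have hdetR : (m : ℝ) / P * (n' / P) - n / P * (m' / P) = 1 / P := by
    rw [← Int.cast_inj (α := ℝ)] at hdet
    push_cast at hdet
    field_simp
    linarith
  obtain ⟨α, β, h⟩ := exists_int_comb_near_of_det_ne_zero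
    (u₀ := m / P) (u₁ := n / P) (v₀ := m' / P) (v₁ := n' / P) (by simpa [hdetR]) x₀ x₁
  refine ⟨α * m + β * m', α * n + β * n', ?_, ?_⟩
  · convert (hw.mul_left α).add (hy.mul_left β) using 1
    ring
  · rw [hdetR] at h
    push_cast
    calc ((m : ℝ) ^ 2 + n ^ 2) * ((x₀ - (α * m + β * m') / P) ^ 2 + (x₁ - (α * n + β * n') / P) ^ 2)
        = (P : ℝ) ^ 2 * (((m / P) ^ 2 + (n / P) ^ 2) *
          ((x₀ - α * (m / P) - β * (m' / P)) ^ 2 + (x₁ - α * (n / P) - β * (n' / P)) ^ 2)) := by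
          field_simp; ring
      _ ≤ (P : ℝ) ^ 2 * (((m / P) ^ 2 + (n / P) ^ 2) ^ 2 / 4 + (1 / P) ^ 2 / 4) := by gcongr
      _ = ((m : ℝ) ^ 2 + n ^ 2) ^ 2 / (4 * P ^ 2) + 1 / 4 := by field_simp

theorem infDist_lensSet_le {P Q : ℤ} {K : ℕ} (hK : 0 < K) (hKP : (K : ℤ) ^ 2 < P)
    (hbox : ∀ m n : ℤ, |m| ≤ K → |n| ≤ K → m ≡ n * Q [ZMOD P] → m = 0 ∧ n = 0)
    (x : EuclideanSpace ℝ (Fin 2)) : Metric.infDist x (lensSet P Q) ≤ 1 / K := by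
  have hP : 0 < P := lt_of_le_of_lt (sq_nonneg _) hKP
  obtain ⟨m, n, m', n', hw, hy, hdet, hn, hnK, hmK⟩ := exists_basis_with_short_vector hP Q hK
  have hKm : (K : ℤ) < |m| := by
    by_contra! h
    exact hn.ne' (hbox m n h (by rwa [abs_of_pos hn]) hw).2
  obtain ⟨a, b, hab, hd⟩ := exists_modEq_near_of_det_eq hP.ne' hw hy hdet (x 0) (x 1)
  set S : ℝ := (m : ℝ) ^ 2 + n ^ 2
  have hSK : (K : ℝ) ^ 2 < S := by
    have h : ((K : ℤ) : ℝ) < |(m : ℝ)| := by exact_mod_cast hKm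
    have := pow_lt_pow_left₀ h (by positivity) two_ne_zero
    push_cast at this
    rw [sq_abs] at this
    nlinarith [sq_nonneg (n : ℝ)]
  have hSP : S * K ^ 2 ≤ 2 * P ^ 2 := by
    have hm : (|(m : ℝ)| * K) ^ 2 ≤ (P : ℝ) ^ 2 :=
      pow_le_pow_left₀ (by positivity) (by exact_mod_cast hmK) 2
    have hn2 : (n : ℝ) ^ 2 ≤ (K : ℝ) ^ 2 :=
      pow_le_pow_left₀ (by exact_mod_cast hn.le) (by exact_mod_cast hnK) 2
    have hK4 : ((K : ℝ) ^ 2) ^ 2 ≤ (P : ℝ) ^ 2 :=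
      pow_le_pow_left₀ (by positivity) (by exact_mod_cast hKP.le) 2
    rw [mul_pow, sq_abs] at hm
    nlinarith [mul_le_mul_of_nonneg_right hn2 (sq_nonneg (K : ℝ))]
  have hS : 0 < S := lt_trans (by positivity) hSK
  have hdist : (x 0 - a / P) ^ 2 + (x 1 - b / P) ^ 2 ≤ 1 / (K : ℝ) ^ 2 := by
    calc (x 0 - a / P) ^ 2 + (x 1 - b / P) ^ 2 ≤ (S ^ 2 / (4 * P ^ 2) + 1 / 4) / S := by
          rw [le_div_iff₀ hS, mul_comm]; exact hd
      _ = S / (4 * P ^ 2) + 1 / (4 * S) := by field_simp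
      _ ≤ 1 / (2 * K ^ 2) + 1 / (4 * K ^ 2) := by
          refine add_le_add ?_ (by gcongr)
          rw [div_le_div_iff₀ (by positivity) (by positivity)]
          linarith
      _ ≤ 1 / (K : ℝ) ^ 2 := by field_simp; linarith
  calc Metric.infDist x (lensSet P Q) ≤ dist x !₂[(a : ℝ) / P, (b : ℝ) / P] :=
        Metric.infDist_le_dist_of_mem (mem_lensSet_of_modEq hP.ne' hab)
    _ ≤ 1 / K := by
        rw [EuclideanSpace.dist_eq, Real.sqrt_le_iff, Fin.sum_univ_two]
        refine ⟨by positivity, ?_⟩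
        simpa [Real.dist_eq, sq_abs, div_pow] using hdist

def parallelLines (c : EuclideanSpace ℝ (Fin 2)) (m n : ℤ) : Set (EuclideanSpace ℝ (Fin 2)) :=
  {x | ∃ (t : ℝ) (a a' : ℤ), x 0 = c 0 + t * m + a ∧ x 1 = c 1 + t * n + a'}

theorem exists_int_eq_of_mem_lensSet {P Q m n : ℤ} (h : m ≡ n * Q [ZMOD P])
    {x : EuclideanSpace ℝ (Fin 2)} (hx : x ∈ lensSet P Q) : ∃ s : ℤ, n * x 0 - m * x 1 = s := by
  obtain ⟨a, b, k, hx₀, hx₁⟩ := hx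
  obtain ⟨c, hc⟩ := h.dvd
  rw [hx₀, hx₁]
  by_cases hP : (P : ℝ) = 0
  · exact ⟨n * a - m * b, by simp [hP]⟩
  · have hcR : (n : ℝ) * Q - m = P * c := by exact_mod_cast hc
    refine ⟨n * a - m * b + k * c, ?_⟩
    push_cast
    field_simp
    linear_combination k * hcR

theorem exists_parallelLines_cover_of_int_eq {m n : ℤ} (hmn : ¬(m = 0 ∧ n = 0)) :
    ∃ c : Fin (Int.gcd m n) → EuclideanSpace ℝ (Fin 2),
      {x : EuclideanSpace ℝ (Fin 2) | ∃ s : ℤ, n * x 0 - m * x 1 = s} ⊆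
        ⋃ i, parallelLines (c i) m n := by
  have hS : (m : ℝ) ^ 2 + n ^ 2 ≠ 0 := by
    rcases not_and_or.1 hmn with h | h
    · have : (m : ℝ) ≠ 0 := by exact_mod_cast h
      positivity
    · have : (n : ℝ) ≠ 0 := by exact_mod_cast h
      positivity
  have hg : (0 : ℤ) < Int.gcd m n := by exact_mod_cast Int.gcd_pos_iff.2 (not_and_or.1 hmn)
  -- `c i` is the point of the line `n x₀ - m x₁ = i` closest to the origin
  refine ⟨fun i => !₂[(i : ℝ) * n / (m ^ 2 + n ^ 2), -((i : ℝ) * m) / (m ^ 2 + n ^ 2)],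
    fun x ⟨s, hs⟩ => ?_⟩
  set g : ℤ := (Int.gcd m n : ℤ)
  set r := s % g
  have hr : 0 ≤ r := Int.emod_nonneg s hg.ne'
  have hrg : r < g := Int.emod_lt_of_pos s hg
  refine Set.mem_iUnion.2 ⟨⟨r.toNat, by omega⟩, ?_⟩
  have hrR : ((r.toNat : ℕ) : ℝ) = r := by exact_mod_cast Int.toNat_of_nonneg hr
  set A := Int.gcdB m n * (s / g)
  set B := -Int.gcdA m n * (s / g)
  have hAB : n * A - m * B = s - r := by
    linear_combination (-(s / g)) * Int.gcd_eq_gcd_ab m n + Int.mul_ediv_add_emod s g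
  have hABR : (n : ℝ) * A - m * B = s - r := by exact_mod_cast hAB
  set e₀ := x 0 - r * n / (m ^ 2 + n ^ 2) - A
  set e₁ := x 1 + r * m / (m ^ 2 + n ^ 2) - B
  have he : (n : ℝ) * e₀ - m * e₁ = 0 := by
    have hc : (n : ℝ) * (r * n / (m ^ 2 + n ^ 2)) + m * (r * m / (m ^ 2 + n ^ 2)) = r := by
      field_simp
      ring
    linear_combination hs - hc - hABR
  have h₀ : (m * e₀ + n * e₁) / (m ^ 2 + n ^ 2) * m = e₀ := by
    rw [div_mul_eq_mul_div, div_eq_iff hS]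
    linear_combination (-n) * he
  have h₁ : (m * e₀ + n * e₁) / (m ^ 2 + n ^ 2) * n = e₁ := by
    rw [div_mul_eq_mul_div, div_eq_iff hS]
    linear_combination m * he
  refine ⟨(m * e₀ + n * e₁) / (m ^ 2 + n ^ 2), A, B, ?_, ?_⟩
  · simp only [Matrix.cons_val_zero, hrR, h₀]
    linarith
  · simp only [Matrix.cons_val_one, Matrix.cons_val_zero, hrR, h₁, neg_div]
    linarith

theorem tendsto_iSup_infDist_lensSet {p q : ℕ → ℤ} (hp : Tendsto p atTop atTop)
    (hfin : ∀ m n : ℤ, ¬(m = 0 ∧ n = 0) → {l | m ≡ n * q l [ZMOD p l]}.Finite)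
    {ι : Type*} [Nonempty ι] (f : ι → EuclideanSpace ℝ (Fin 2)) :
    Tendsto (fun l => ⨆ i, Metric.infDist (f i) (lensSet (p l) (q l))) atTop (𝓝 0) := by
  have hbox (K : ℕ) : ∀ᶠ l in atTop, ∀ m ∈ Finset.Icc (-(K : ℤ)) K, ∀ n ∈ Finset.Icc (-(K : ℤ)) K,
      m ≡ n * q l [ZMOD p l] → m = 0 ∧ n = 0 := by
    simp only [eventually_all_finset]
    intro m _ n _
    by_cases h : m = 0 ∧ n = 0
    · exact .of_forall fun _ _ => h
    · rw [← Nat.cofinite_eq_atTop]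
      exact (hfin m n h).eventually_cofinite_notMem.mono fun _ hl hmod => absurd hmod hl
  refine tendsto_order.2 ⟨fun a ha => .of_forall fun l =>
    ha.trans_le (Real.iSup_nonneg fun _ => Metric.infDist_nonneg), fun ε hε => ?_⟩
  obtain ⟨K, hK⟩ := exists_nat_one_div_lt hε
  filter_upwards [hbox (K + 1), hp.eventually_gt_atTop (((K + 1 : ℕ) : ℤ) ^ 2)] with l hl hKP
  refine lt_of_le_of_lt (ciSup_le fun i => infDist_lensSet_le K.succ_pos hKP
    (fun m n hm hn => hl m (Finset.mem_Icc.2 (abs_le.1 hm)) n (Finset.mem_Icc.2 (abs_le.1 hn)))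
    (f i)) ?_
  exact_mod_cast hK

theorem lens_orbit_dichotomy_general (p q : ℕ → ℤ)
    (hp : Tendsto (fun l => p l) atTop atTop)
    (L : ℕ → Set (EuclideanSpace ℝ (Fin 2)))
    (hL : ∀ l, L l = {x | ∃ a b k : ℤ,
        x 0 = (a : ℝ) + (k : ℝ) * (q l : ℝ) / (p l : ℝ) ∧ x 1 = (b : ℝ) + (k : ℝ) / (p l : ℝ)}) :
    ∃ φ : ℕ → ℕ, StrictMono φ ∧
      (Tendsto (fun l => ⨆ x : {x : EuclideanSpace ℝ (Fin 2) //
            x 0 ∈ Set.Icc (0 : ℝ) 1 ∧ x 1 ∈ Set.Icc (0 : ℝ) 1},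
            Metric.infDist x.1 (L (φ l))) atTop (𝓝 0)
        ∨ ∃ m₀ n₀ : ℤ, ¬ (m₀ = 0 ∧ n₀ = 0) ∧ ∃ b : ℕ, 0 < b ∧
            ∀ l, ∃ c : Fin b → EuclideanSpace ℝ (Fin 2),
              L (φ l) ⊆ ⋃ i : Fin b, {x | ∃ (t : ℝ) (a a' : ℤ),
                x 0 = c i 0 + t * m₀ + a ∧ x 1 = c i 1 + t * n₀ + a'}) := by
  obtain rfl : L = fun l => lensSet (p l) (q l) := funext hL
  by_cases hline : ∃ m n : ℤ, ¬(m = 0 ∧ n = 0) ∧ {l | m ≡ n * q l [ZMOD p l]}.Infinite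
  · obtain ⟨m, n, hmn, hinf⟩ := hline
    obtain ⟨c, hc⟩ := exists_parallelLines_cover_of_int_eq hmn
    refine ⟨Nat.nth (fun l => m ≡ n * q l [ZMOD p l]), Nat.nth_strictMono hinf,
      Or.inr ⟨m, n, hmn, Int.gcd m n, Int.gcd_pos_iff.2 (not_and_or.1 hmn), fun l => ⟨c, ?_⟩⟩⟩
    exact fun x hx => hc (exists_int_eq_of_mem_lensSet (Nat.nth_mem_of_infinite hinf l) hx)
  · have : Nonempty {x : EuclideanSpace ℝ (Fin 2) //
        x 0 ∈ Set.Icc (0 : ℝ) 1 ∧ x 1 ∈ Set.Icc (0 : ℝ) 1} := ⟨⟨0, by simp, by simp⟩⟩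
    exact ⟨id, strictMono_id, Or.inl (tendsto_iSup_infDist_lensSet hp
      (fun m n hmn => Set.not_infinite.1 fun h => hline ⟨m, n, hmn, h⟩) Subtype.val)⟩

/-- Let `(p_l, q_l)` be a sequence of pairs of integers with
`p_l → ∞`, `1 ≤ q_l < p_l` and `gcd(p_l, q_l) = 1`, and let
`L_l = {(a + k q_l/p_l, b + k/p_l) : a, b, k ∈ ℤ} ⊂ ℝ²`. Then there is a subsequence
along which one of the following holds: (1) `sup_{x ∈ [0,1]²} dist(x, L_l) → 0`
(the lattices become dense); or (2) there exist a nonzero vector `(m₀, n₀) ∈ ℤ²` and a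
positive integer `b`, independent of `l`, such that for every `l` in the subsequence
there are points `c_{l,1}, …, c_{l,b} ∈ ℝ²` with
`L_l ⊆ ⋃_{i=1}^{b} (c_{l,i} + ℝ·(m₀, n₀) + ℤ²)`. -/
theorem lens_orbit_dichotomy (p q : ℕ → ℤ)
    (hq : ∀ l, 1 ≤ q l ∧ q l < p l)
    (hgcd : ∀ l, Int.gcd (p l) (q l) = 1)
    (hp : Tendsto (fun l => p l) atTop atTop)
    (L : ℕ → Set (EuclideanSpace ℝ (Fin 2)))
    (hL : ∀ l, L l = {x | ∃ a b k : ℤ,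
        x 0 = (a : ℝ) + (k : ℝ) * (q l : ℝ) / (p l : ℝ) ∧ x 1 = (b : ℝ) + (k : ℝ) / (p l : ℝ)}) :
    ∃ φ : ℕ → ℕ, StrictMono φ ∧
      (Tendsto (fun l => ⨆ x : {x : EuclideanSpace ℝ (Fin 2) //
            x 0 ∈ Set.Icc (0 : ℝ) 1 ∧ x 1 ∈ Set.Icc (0 : ℝ) 1},
            Metric.infDist x.1 (L (φ l))) atTop (𝓝 0)
        ∨ ∃ m₀ n₀ : ℤ, ¬ (m₀ = 0 ∧ n₀ = 0) ∧ ∃ b : ℕ, 0 < b ∧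
            ∀ l, ∃ c : Fin b → EuclideanSpace ℝ (Fin 2),
              L (φ l) ⊆ ⋃ i : Fin b, {x | ∃ (t : ℝ) (a a' : ℤ),
                x 0 = c i 0 + t * m₀ + a ∧ x 1 = c i 1 + t * n₀ + a'}) :=
  lens_orbit_dichotomy_general p q hp L hL
end

section
/- Let p ≥ 4 be an integer. If r ∈ (0, π/2) and s ∈ (0, π/2) satisfy the two equations (2π²/p) sin² r = 2πs − π sin(2s) and (2π²/p) sin(2r) = 4π sin² s, then s ≤ π/p. -/
/-! Write `u = sin² r`. The two equations say `2π u = p (2s − sin 2s)` and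
`π sin r cos r = p sin² s`, hence `p² sin⁴ s = π² u (1 − u)`. Suppose `π < p s`.
Bounding `1 − u ≤ 1` and `2s − sin 2s ≤ 4s³/3` gives `sin⁴ s < (2/3) s⁴`, which fails for `s ≤ 3/5`;
bounding `u (1 − u) ≤ 1/4` gives `sin² s < s/2`, i.e. `cos 2s > 1 − s`, which fails for
`s ≥ (π − 2)/2`. The two ranges overlap, so `s ≤ π/p`. -/

open Real

lemma cos_le_one_sub_half_self {x : ℝ} (h₀ : π - 2 ≤ x) (h₁ : x ≤ π) : cos x ≤ 1 - x / 2 := by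
  rcases le_total x (π / 2) with hx | hx
  · calc cos x = sin (π / 2 - x) := (sin_pi_div_two_sub x).symm
      _ ≤ π / 2 - x := sin_le (by linarith)
      _ ≤ 1 - x / 2 := by linarith
  · have hjordan : 2 / π * (x - π / 2) ≤ sin (x - π / 2) := mul_le_sin (by linarith) (by linarith)
    calc cos x = -sin (x - π / 2) := by rw [sin_sub_pi_div_two, neg_neg]
      _ ≤ -(2 / π * (x - π / 2)) := neg_le_neg hjordan
      _ = 1 - 2 / π * x := by field_simp; ring
      _ ≤ 1 - x / 2 := by
        have : x / 2 ≤ 2 / π * x := by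
          rw [div_mul_eq_mul_div, le_div_iff₀ pi_pos]
          nlinarith [pi_pos, pi_le_four]
        linarith

lemma self_div_two_le_sin_sq {x : ℝ} (h₀ : (π - 2) / 2 ≤ x) (h₁ : x ≤ π / 2) :
    x / 2 ≤ sin x ^ 2 := by
  have := cos_le_one_sub_half_self (x := 2 * x) (by linarith) (by linarith)
  rw [cos_two_mul, cos_sq'] at this
  linarith

lemma two_div_three_mul_pow_four_le_sin_pow_four {x : ℝ} (h₀ : 0 ≤ x) (h₁ : x ≤ 3 / 5) :
    2 / 3 * x ^ 4 ≤ sin x ^ 4 := by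
  have hlin : 47 / 50 * x ≤ sin x := by
    nlinarith [sin_ge_sub_cube h₀, mul_nonneg (mul_nonneg h₀ h₀) (sub_nonneg.2 h₁)]
  calc 2 / 3 * x ^ 4 ≤ (47 / 50 * x) ^ 4 := by nlinarith [pow_nonneg h₀ 4]
    _ ≤ sin x ^ 4 := pow_le_pow_left₀ (by positivity) hlin 4

lemma two_mul_sub_sin_two_mul_le {x : ℝ} (hx : 0 ≤ x) : 2 * x - sin (2 * x) ≤ 4 / 3 * x ^ 3 := by
  nlinarith [sin_ge_sub_cube (x := 2 * x) (by linarith)]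

section TorusSphere

variable {k r s : ℝ}

lemma pi_mul_sin_mul_cos_eq (hk : k ≠ 0)
    (harea : 2 * π ^ 2 / k * sin (2 * r) = 4 * π * sin s ^ 2) :
    π * (sin r * cos r) = k * sin s ^ 2 := by
  rw [sin_two_mul, div_mul_eq_mul_div, div_eq_iff hk] at harea
  apply mul_left_cancel₀ (mul_ne_zero four_ne_zero pi_ne_zero)
  linear_combination harea

lemma two_mul_pi_mul_sin_sq_eq (hk : k ≠ 0)
    (hvol : 2 * π ^ 2 / k * sin r ^ 2 = 2 * π * s - π * sin (2 * s)) :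
    2 * π * sin r ^ 2 = k * (2 * s - sin (2 * s)) := by
  rw [div_mul_eq_mul_div, div_eq_iff hk] at hvol
  apply mul_left_cancel₀ pi_ne_zero
  linear_combination hvol

lemma sin_pow_four_lt_of_pi_lt_mul (hk : 0 < k)
    (hvol : 2 * π ^ 2 / k * sin r ^ 2 = 2 * π * s - π * sin (2 * s))
    (harea : 2 * π ^ 2 / k * sin (2 * r) = 4 * π * sin s ^ 2) (hks : π < k * s) :
    sin s ^ 4 < 2 / 3 * s ^ 4 := by
  have hs : 0 < s := pos_of_mul_pos_right (pi_pos.trans hks) hk.le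
  have hsincos := pi_mul_sin_mul_cos_eq hk.ne' harea
  have hsin := two_mul_pi_mul_sin_sq_eq hk.ne' hvol
  have : k ^ 2 * sin s ^ 4 < k ^ 2 * (2 / 3 * s ^ 4) :=
    calc k ^ 2 * sin s ^ 4 = π ^ 2 * sin r ^ 2 * cos r ^ 2 := by
          linear_combination -(π * (sin r * cos r) + k * sin s ^ 2) * hsincos
      _ ≤ π ^ 2 * sin r ^ 2 := mul_le_of_le_one_right (by positivity) (cos_sq_le_one r)
      _ = π / 2 * (k * (2 * s - sin (2 * s))) := by linear_combination π / 2 * hsin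
      _ ≤ π / 2 * (k * (4 / 3 * s ^ 3)) := by gcongr; exact two_mul_sub_sin_two_mul_le hs.le
      _ < k * s / 2 * (k * (4 / 3 * s ^ 3)) := by gcongr
      _ = k ^ 2 * (2 / 3 * s ^ 4) := by ring
  exact lt_of_mul_lt_mul_left this (by positivity)

lemma sin_sq_lt_half_of_pi_lt_mul (hk : 0 < k)
    (harea : 2 * π ^ 2 / k * sin (2 * r) = 4 * π * sin s ^ 2) (hks : π < k * s) :
    sin s ^ 2 < s / 2 := by
  have hsincos := pi_mul_sin_mul_cos_eq hk.ne' harea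
  have : (k * sin s ^ 2) ^ 2 < (k * (s / 2)) ^ 2 :=
    calc (k * sin s ^ 2) ^ 2 = π ^ 2 / 4 * sin (2 * r) ^ 2 := by
          rw [← hsincos, sin_two_mul]; ring
      _ ≤ π ^ 2 / 4 := mul_le_of_le_one_right (by positivity) (sin_sq_le_one _)
      _ < (k * (s / 2)) ^ 2 := by nlinarith [pi_pos]
  have := (pow_lt_pow_iff_left₀ (by positivity) (by nlinarith [pi_pos]) two_ne_zero).1 this
  exact lt_of_mul_lt_mul_left this hk.le

end TorusSphere

theorem transition_radius_bound_general (p : ℕ) (hp : 4 ≤ p) (r s : ℝ)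
    (hs : s ∈ Set.Ioo 0 (Real.pi / 2))
    (hvol : (2 * Real.pi ^ 2 / p) * Real.sin r ^ 2
      = 2 * Real.pi * s - Real.pi * Real.sin (2 * s))
    (harea : (2 * Real.pi ^ 2 / p) * Real.sin (2 * r) = 4 * Real.pi * Real.sin s ^ 2) :
    s ≤ Real.pi / p := by
  have hp₀ : (0 : ℝ) < p := Nat.cast_pos.2 (by omega)
  rw [le_div_iff₀ hp₀, mul_comm]
  by_contra! hps
  rcases le_or_gt s (3 / 5) with hsmall | hlarge
  · have := two_div_three_mul_pow_four_le_sin_pow_four hs.1.le hsmall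
    linarith [sin_pow_four_lt_of_pi_lt_mul hp₀ hvol harea hps]
  · have := self_div_two_le_sin_sq (x := s) (by linarith [pi_lt_d2]) hs.2.le
    linarith [sin_sq_lt_half_of_pi_lt_mul hp₀ harea hps]

/-- Let `p ≥ 4` be an integer. If `r ∈ (0, π/2)` and `s ∈ (0, π/2)`
satisfy `(2π²/p) sin² r = 2πs − π sin(2s)` and `(2π²/p) sin(2r) = 4π sin² s`
(a Clifford torus and a geodesic sphere in `L(p,q)` enclosing the same volume and
having the same area), then `s ≤ π/p`. -/
theorem transition_radius_bound (p : ℕ) (hp : 4 ≤ p) (r s : ℝ)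
    (hr : r ∈ Set.Ioo 0 (Real.pi / 2)) (hs : s ∈ Set.Ioo 0 (Real.pi / 2))
    (hvol : (2 * Real.pi ^ 2 / p) * Real.sin r ^ 2
      = 2 * Real.pi * s - Real.pi * Real.sin (2 * s))
    (harea : (2 * Real.pi ^ 2 / p) * Real.sin (2 * r) = 4 * Real.pi * Real.sin s ^ 2) :
    s ≤ Real.pi / p :=
  transition_radius_bound_general p hp r s hs hvol harea
end
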